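/- arXiv:0910.1954 — 2 statements merged into one kernel-verified Lean document; each statement's English description precedes it below -/
import Mathlib

section
/- For every β ∈ [0,1] and p01, p11 ∈ [0,1] (with no ordering assumption on p01, p11), every t ∈ {1,…,T}, every ω ∈ [0,1]^n, and every permutation σ of {1,…,n}, the optimal value dominates the value of the W-recursion applied to any rearrangement of the state: V_t(ω) ≥ W_t(ω_{σ(1)},…,ω_{σ(n)}). -/
open Finset

noncomputable section

/-- The one-step belief update for an unobserved channel. -/
def tauF (p01 p11 : ℝ) (w : ℝ) : ℝ := w * p11 + (1 - w) * p01

/-- The set of admissible actions: subsets of `Fin n` of cardinality `k`. -/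
def actions (n k : ℕ) : Finset (Finset (Fin n)) :=
  (Finset.univ : Finset (Fin n)).powersetCard k

lemma actions_nonempty {n k : ℕ} (hk : k ≤ n) : (actions n k).Nonempty := by
  rw [actions, Finset.powersetCard_nonempty, Finset.card_univ, Fintype.card_fin]
  exact hk

/-- Number of `true` entries in a `{0,1}^k` realization. -/
def countTrue {k : ℕ} (l : Fin k → Bool) : ℕ :=
  (Finset.univ.filter fun i => l i = true).card

/-- `q(l; u) = ∏ u_i^{l_i} (1-u_i)^{1-l_i}`. -/
def qProb {k : ℕ} (u : Fin k → ℝ) (l : Fin k → Bool) : ℝ :=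
  ∏ i : Fin k, if l i then u i else 1 - u i

/-- The top `k` coordinates `(ω_{n-k+1}, …, ω_n)` of a length-`n` vector. -/
def topCoords {n k : ℕ} (hk : k ≤ n) (ω : Fin n → ℝ) : Fin k → ℝ :=
  fun i => ω ⟨n - k + i.val, by omega⟩

/-- The vector `v_l`: `k - m` copies of `p01`, then `τ(ω_1),…,τ(ω_{n-k})`,
then `m` copies of `p11`, where `m` is the number of ones in `l`. -/
def vl {n : ℕ} (k : ℕ) (p01 p11 : ℝ) (ω : Fin n → ℝ) (m : ℕ) : Fin n → ℝ :=
  fun j =>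
    if j.val < k - m then p01
    else if j.val < n - m then tauF p01 p11 (ω ⟨j.val - (k - m), by omega⟩)
    else p11

/-- The greedy-policy value functions `W`, indexed by the number of remaining
steps (`r = 0` corresponds to the terminal time `T`). -/
def Wval (n k : ℕ) (hk : k ≤ n) (p01 p11 β : ℝ) : ℕ → (Fin n → ℝ) → ℝ
  | 0, ω => ∑ i : Fin n, if n - k ≤ i.val then ω i else 0
  | r + 1, ω =>
      (∑ i : Fin n, if n - k ≤ i.val then ω i else 0) +
        β * ∑ l : Fin k → Bool,
          qProb (topCoords hk ω) l *
            Wval n k hk p01 p11 β r (vl k p01 p11 ω (countTrue l))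

/-- The updated information state `ω^{a,s}`. -/
def nextState {n : ℕ} (p01 p11 : ℝ) (ω : Fin n → ℝ) (a : Finset (Fin n))
    (s : {i // i ∈ a} → Bool) : Fin n → ℝ :=
  fun j => if h : j ∈ a then (if s ⟨j, h⟩ then p11 else p01) else tauF p01 p11 (ω j)

/-- The probability of the realization `s` of the selected channels `a`. -/
def obsProb {n : ℕ} (ω : Fin n → ℝ) (a : Finset (Fin n))
    (s : {i // i ∈ a} → Bool) : ℝ :=
  ∏ i : {i // i ∈ a}, if s i then ω i.val else 1 - ω i.val

/-- The optimal value functions `V`, indexed by the number of remaining steps. -/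
def Vval (n k : ℕ) (hk : k ≤ n) (p01 p11 β : ℝ) : ℕ → (Fin n → ℝ) → ℝ
  | 0, ω => (actions n k).sup' (actions_nonempty hk) fun a => ∑ i ∈ a, ω i
  | r + 1, ω =>
      (actions n k).sup' (actions_nonempty hk) fun a =>
        (∑ i ∈ a, ω i) +
          β * ∑ s : {i // i ∈ a} → Bool,
            obsProb ω a s * Vval n k hk p01 p11 β r (nextState p01 p11 ω a s)

/-- `Q_t(ω, a)`: the value of taking action `a` now and acting optimally
afterwards, indexed by the number of remaining steps. -/
def Qval (n k : ℕ) (hk : k ≤ n) (p01 p11 β : ℝ) : ℕ → (Fin n → ℝ) → Finset (Fin n) → ℝ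
  | 0, ω, a => ∑ i ∈ a, ω i
  | r + 1, ω, a =>
      (∑ i ∈ a, ω i) +
        β * ∑ s : {i // i ∈ a} → Bool,
          obsProb ω a s * Vval n k hk p01 p11 β r (nextState p01 p11 ω a s)

/-- Replace the coordinates in positions `j` and `j+1` (`0`-indexed) by `x` and `y`. -/
def upd2 {n : ℕ} (ω : Fin n → ℝ) (j : ℕ) (hj : j + 1 < n) (x y : ℝ) : Fin n → ℝ :=
  Function.update (Function.update ω ⟨j, by omega⟩ x) ⟨j + 1, hj⟩ y

/-- The cyclic shift `(ω_2, …, ω_n, ω_1)`. -/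
def cyc {n : ℕ} (hn : 0 < n) (ω : Fin n → ℝ) : Fin n → ℝ :=
  fun j => ω ⟨(j.val + 1) % n, Nat.mod_lt _ hn⟩

end

/-!
`Wval` is the value of the policy that always plays the last `k` channels. From the state `ω`,
play instead the channels `σ (n - k + 1), …, σ n`. This gives the same immediate reward and the
same outcome probabilities as `Wval` at `ω ∘ σ`. After each outcome, the state `vl` from which
`Wval` continues is a rearrangement of the true next state composed with `σ`. So an induction
on the number of remaining steps, over all rearrangements at once, gives
`Wval (ω ∘ σ) ≤ Qval ω a ≤ Vval ω` with `a = σ '' {n - k + 1, …, n}`.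
-/

variable {n k : ℕ} {p01 p11 : ℝ}

theorem exists_perm_eq_comp_of_map_univ_eq {α β : Type*} [Fintype α] [DecidableEq β]
    {f g : α → β} (h : univ.val.map f = univ.val.map g) : ∃ π : Equiv.Perm α, f = g ∘ π := by
  have hfiber : ∀ c, Fintype.card {a // f a = c} = Fintype.card {a // g a = c} := by
    intro c
    have := congrArg (Multiset.count c) h
    simp only [Multiset.count_map, eq_comm (a := c)] at this
    simpa only [Fintype.card_subtype, Finset.card_def, Finset.filter_val] using this
  exact ⟨Equiv.ofFiberEquiv fun c => Fintype.equivOfCardEq (hfiber c),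
    funext fun a => (Equiv.ofFiberEquiv_map _ a).symm⟩

theorem exists_perm_eq_comp_of_ofFn_perm {β : Type*} {f g : Fin n → β}
    (h : (List.ofFn f).Perm (List.ofFn g)) : ∃ π : Equiv.Perm (Fin n), f = g ∘ π := by
  classical
  exact exists_perm_eq_comp_of_map_univ_eq (by simpa [Fin.univ_val_map] using h)

theorem count_ofFn {β : Type*} [DecidableEq β] (f : Fin n → β) (b : β) :
    (List.ofFn f).count b = #{i | f i = b} := by
  rw [← Multiset.coe_count, ← Fin.univ_val_map, Multiset.count_map]
  exact congrArg Multiset.card (Multiset.filter_congr fun _ _ => eq_comm)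

theorem countTrue_le (l : Fin k → Bool) : countTrue l ≤ k :=
  (card_filter_le _ _).trans_eq (card_fin k)

theorem card_filter_eq_false (l : Fin k → Bool) :
    #{i | l i = false} = k - countTrue l := by
  have h := card_filter_add_card_filter_not (s := (univ : Finset (Fin k))) (fun i => l i = true)
  simp only [Bool.not_eq_true, card_univ, Fintype.card_fin] at h
  rw [countTrue]
  omega

theorem ofFn_perm_replicate_append_replicate (l : Fin k → Bool) :
    (List.ofFn l).Perm
      (List.replicate (k - countTrue l) false ++ List.replicate (countTrue l) true) := by
  rw [List.perm_replicate_append_replicate Bool.false_ne_true, count_ofFn, count_ofFn,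
    card_filter_eq_false]
  exact ⟨rfl, rfl, fun b _ => by cases b <;> simp⟩

def topEmb (hkn : k ≤ n) : Fin k ↪ Fin n :=
  ⟨fun i => ⟨n - k + i, by omega⟩, fun i j h => Fin.ext (by simpa using congrArg Fin.val h)⟩

@[simp]
theorem val_topEmb (hkn : k ≤ n) (i : Fin k) : (topEmb hkn i : ℕ) = n - k + i := rfl

theorem mem_map_topEmb (hkn : k ≤ n) {j : Fin n} :
    j ∈ univ.map (topEmb hkn) ↔ n - k ≤ j := by
  simp only [mem_map, mem_univ, true_and, Fin.ext_iff, val_topEmb]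
  exact ⟨fun ⟨i, _⟩ => by omega, fun _ => ⟨⟨j - (n - k), by omega⟩, by simp only; omega⟩⟩

theorem ofFn_vl {m : ℕ} (hmk : m ≤ k) (hkn : k ≤ n) (ω : Fin n → ℝ) :
    List.ofFn (vl k p01 p11 ω m) = List.replicate (k - m) p01 ++
      List.ofFn (fun i : Fin (n - k) => tauF p01 p11 (ω (Fin.castLE (by omega) i))) ++
      List.replicate m p11 := by
  refine List.ext_getElem (by simp; omega) fun j _ _ => ?_
  simp only [List.getElem_ofFn, vl, List.getElem_append, List.getElem_replicate,
    List.length_append, List.length_replicate, List.length_ofFn]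
  split_ifs <;> first | rfl | omega

noncomputable def univMapEquiv (e : Fin k ↪ Fin n) : Fin k ≃ {x // x ∈ univ.map e} :=
  (Equiv.ofInjective e e.injective).trans (Equiv.subtypeEquivRight fun _ => by simp)

noncomputable def obsEquiv (e : Fin k ↪ Fin n) :
    (Fin k → Bool) ≃ ({x // x ∈ univ.map e} → Bool) :=
  (univMapEquiv e).arrowCongr (Equiv.refl Bool)

theorem obsEquiv_apply_mk (e : Fin k ↪ Fin n) (l : Fin k → Bool) (i : Fin k)
    (h : e i ∈ univ.map e) : obsEquiv e l ⟨e i, h⟩ = l i := by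
  simp only [obsEquiv, Equiv.arrowCongr_apply, Equiv.coe_refl, Function.comp_apply, id]
  congr
  exact (univMapEquiv e).symm_apply_eq.mpr rfl

section NextState

variable {ω : Fin n → ℝ} {a : Finset (Fin n)} {s : {i // i ∈ a} → Bool} {j : Fin n}

theorem nextState_of_notMem (hj : j ∉ a) : nextState p01 p11 ω a s j = tauF p01 p11 (ω j) :=
  dif_neg hj

theorem nextState_univMap_apply (e : Fin k ↪ Fin n) (l : Fin k → Bool) (i : Fin k) :
    nextState p01 p11 ω (univ.map e) (obsEquiv e l) (e i) = if l i then p11 else p01 := by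
  have h : e i ∈ univ.map e := mem_map_of_mem e (mem_univ i)
  rw [nextState, dif_pos h, obsEquiv_apply_mk]

theorem nextState_univMap_trans_comp (e : Fin k ↪ Fin n) (σ : Equiv.Perm (Fin n))
    (l : Fin k → Bool) :
    nextState p01 p11 ω (univ.map (e.trans σ.toEmbedding)) (obsEquiv _ l) ∘ σ =
      nextState p01 p11 (ω ∘ σ) (univ.map e) (obsEquiv e l) := by
  funext j
  by_cases hj : j ∈ Set.range e
  · obtain ⟨i, rfl⟩ := hj
    exact (nextState_univMap_apply (e.trans σ.toEmbedding) l i).trans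
      (nextState_univMap_apply e l i).symm
  · have hσj : σ j ∉ univ.map (e.trans σ.toEmbedding) := by simpa using hj
    rw [Function.comp_apply, nextState_of_notMem hσj, nextState_of_notMem (by simpa using hj)]
    rfl

theorem ofFn_nextState_topEmb (hkn : k ≤ n) (l : Fin k → Bool) :
    List.ofFn (nextState p01 p11 ω (univ.map (topEmb hkn)) (obsEquiv _ l)) =
      List.ofFn (fun i : Fin (n - k) => tauF p01 p11 (ω (Fin.castLE (by omega) i))) ++
        List.ofFn (fun i => if l i then p11 else p01) := by
  refine List.ext_getElem (by simp; omega) fun j hj _ => ?_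
  simp only [List.getElem_ofFn, List.getElem_append, List.length_ofFn]
  split
  next hlt => exact nextState_of_notMem (by rw [mem_map_topEmb]; simp only; omega)
  next hlt =>
    have htop : (⟨j, by simpa using hj⟩ : Fin n) =
        topEmb hkn ⟨j - (n - k), by simp at hj; omega⟩ := Fin.ext (by simp; omega)
    rw [htop, nextState_univMap_apply]

end NextState

theorem exists_perm_vl_eq_nextState_topEmb (hkn : k ≤ n) (ω : Fin n → ℝ)
    (l : Fin k → Bool) : ∃ π : Equiv.Perm (Fin n), vl k p01 p11 ω (countTrue l) =
      nextState p01 p11 ω (univ.map (topEmb hkn)) (obsEquiv _ l) ∘ π := by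
  apply exists_perm_eq_comp_of_ofFn_perm
  rw [ofFn_vl (countTrue_le l) hkn, ofFn_nextState_topEmb, List.append_assoc]
  have hobs : (List.ofFn fun i => if l i then p11 else p01).Perm
      (List.replicate (k - countTrue l) p01 ++ List.replicate (countTrue l) p11) := by
    simpa [Function.comp_def] using
      (ofFn_perm_replicate_append_replicate l).map fun b => if b then p11 else p01
  exact (List.perm_append_comm_assoc _ _ _).trans (hobs.symm.append_left _)

theorem obsProb_univMap (ω : Fin n → ℝ) (e : Fin k ↪ Fin n) (l : Fin k → Bool) :
    obsProb ω (univ.map e) (obsEquiv e l) = qProb (ω ∘ e) l := by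
  rw [obsProb, qProb, ← (univMapEquiv e).prod_comp]
  refine prod_congr rfl fun i _ => ?_
  rw [show univMapEquiv e i = ⟨e i, mem_map_of_mem e (mem_univ i)⟩ from rfl, obsEquiv_apply_mk]
  rfl

theorem sum_ite_le_val_eq_sum_topEmb (hkn : k ≤ n) (ω : Fin n → ℝ) :
    (∑ i : Fin n, if n - k ≤ i.val then ω i else 0) = ∑ i, ω (topEmb hkn i) := by
  rw [← sum_filter, ← sum_map univ (topEmb hkn)]
  congr 1
  ext j
  rw [mem_filter, mem_map_topEmb]
  simp

theorem sum_ite_le_val_comp_perm (hkn : k ≤ n) (ω : Fin n → ℝ) (σ : Equiv.Perm (Fin n)) :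
    (∑ i : Fin n, if n - k ≤ i.val then (ω ∘ σ) i else 0) =
      ∑ i ∈ univ.map ((topEmb hkn).trans σ.toEmbedding), ω i := by
  rw [sum_ite_le_val_eq_sum_topEmb hkn, sum_map]
  rfl

theorem univMap_mem_actions (e : Fin k ↪ Fin n) : univ.map e ∈ actions n k := by
  simp [actions, mem_powersetCard]

theorem Qval_le_Vval {hkn : k ≤ n} {β : ℝ} (r : ℕ) (ω : Fin n → ℝ)
    {a : Finset (Fin n)} (ha : a ∈ actions n k) :
    Qval n k hkn p01 p11 β r ω a ≤ Vval n k hkn p01 p11 β r ω := by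
  cases r <;> exact le_sup' (fun a => Qval n k hkn p01 p11 β _ ω a) ha

theorem tauF_mem_Icc (hp01 : p01 ∈ Set.Icc (0 : ℝ) 1) (hp11 : p11 ∈ Set.Icc (0 : ℝ) 1)
    {w : ℝ} (hw : w ∈ Set.Icc (0 : ℝ) 1) : tauF p01 p11 w ∈ Set.Icc (0 : ℝ) 1 := by
  obtain ⟨_, _⟩ := hp01; obtain ⟨_, _⟩ := hp11; obtain ⟨_, _⟩ := hw
  constructor <;> unfold tauF <;> nlinarith

theorem nextState_mem_Icc (hp01 : p01 ∈ Set.Icc (0 : ℝ) 1) (hp11 : p11 ∈ Set.Icc (0 : ℝ) 1)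
    {ω : Fin n → ℝ} (hω : ∀ i, ω i ∈ Set.Icc (0 : ℝ) 1) (a : Finset (Fin n))
    (s : {i // i ∈ a} → Bool) (j : Fin n) :
    nextState p01 p11 ω a s j ∈ Set.Icc (0 : ℝ) 1 := by
  unfold nextState
  split_ifs
  exacts [hp11, hp01, tauF_mem_Icc hp01 hp11 (hω j)]

theorem qProb_nonneg {u : Fin k → ℝ} (hu : ∀ i, u i ∈ Set.Icc (0 : ℝ) 1) (l : Fin k → Bool) :
    0 ≤ qProb u l :=
  prod_nonneg fun i _ => by split_ifs <;> linarith [(hu i).1, (hu i).2]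

theorem Wval_comp_perm_le_Vval (hkn : k ≤ n) {β : ℝ} (hp01 : p01 ∈ Set.Icc (0 : ℝ) 1)
    (hp11 : p11 ∈ Set.Icc (0 : ℝ) 1) (hβ : 0 ≤ β) (r : ℕ) (ω : Fin n → ℝ)
    (hω : ∀ i, ω i ∈ Set.Icc (0 : ℝ) 1) (σ : Equiv.Perm (Fin n)) :
    Wval n k hkn p01 p11 β r (ω ∘ σ) ≤ Vval n k hkn p01 p11 β r ω := by
  refine le_trans ?_
    (Qval_le_Vval r ω (univMap_mem_actions ((topEmb hkn).trans σ.toEmbedding)))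
  induction r generalizing ω σ with
  | zero => exact (sum_ite_le_val_comp_perm hkn ω σ).le
  | succ r ih =>
    set e := (topEmb hkn).trans σ.toEmbedding
    have hnext : ∀ l, Wval n k hkn p01 p11 β r (vl k p01 p11 (ω ∘ σ) (countTrue l)) ≤
        Vval n k hkn p01 p11 β r (nextState p01 p11 ω (univ.map e) (obsEquiv e l)) := by
      intro l
      obtain ⟨π, hπ⟩ := exists_perm_vl_eq_nextState_topEmb hkn (ω ∘ σ) l
      rw [hπ, ← nextState_univMap_trans_comp, Function.comp_assoc, ← Equiv.coe_trans]
      exact (ih _ (nextState_mem_Icc hp01 hp11 hω _ _) _).trans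
        (Qval_le_Vval r _ (univMap_mem_actions _))
    rw [Wval, Qval, sum_ite_le_val_comp_perm hkn, ← (obsEquiv e).sum_comp]
    refine add_le_add le_rfl (mul_le_mul_of_nonneg_left (sum_le_sum fun l _ => ?_) hβ)
    rw [obsProb_univMap]
    exact mul_le_mul_of_nonneg_left (hnext l) (qProb_nonneg (fun i => hω _) l)

theorem optimal_value_ge_W_of_any_rearrangement_general
    (n k T : ℕ) (hkn : k ≤ n)
    (p01 p11 β : ℝ)
    (hp01 : p01 ∈ Set.Icc (0:ℝ) 1) (hp11 : p11 ∈ Set.Icc (0:ℝ) 1)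
    (hβ : β ∈ Set.Icc (0:ℝ) 1)
    (t : ℕ)
    (ω : Fin n → ℝ) (hω : ∀ i, ω i ∈ Set.Icc (0:ℝ) 1)
    (σ : Equiv.Perm (Fin n)) :
    Vval n k hkn p01 p11 β (T - t) ω ≥
      Wval n k hkn p01 p11 β (T - t) (ω ∘ σ) :=
  Wval_comp_perm_le_Vval hkn hp01 hp11 hβ.1 (T - t) ω hω σ

/-- For every `β ∈ [0,1]`, `p01, p11 ∈ [0,1]` (no ordering
assumption), every `t ∈ {1,…,T}`, every `ω ∈ [0,1]^n`, and every permutation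
`σ`, the optimal value dominates the `W`-recursion at any rearrangement:
`V_t(ω) ≥ W_t(ω_{σ(1)},…,ω_{σ(n)})`. -/
theorem optimal_value_ge_W_of_any_rearrangement
    (n k T : ℕ) (hk1 : 1 ≤ k) (hkn : k ≤ n) (hT : 1 ≤ T)
    (p01 p11 β : ℝ)
    (hp01 : p01 ∈ Set.Icc (0:ℝ) 1) (hp11 : p11 ∈ Set.Icc (0:ℝ) 1)
    (hβ : β ∈ Set.Icc (0:ℝ) 1)
    (t : ℕ) (ht1 : 1 ≤ t) (ht2 : t ≤ T)
    (ω : Fin n → ℝ) (hω : ∀ i, ω i ∈ Set.Icc (0:ℝ) 1)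
    (σ : Equiv.Perm (Fin n)) :
    Vval n k hkn p01 p11 β (T - t) ω ≥
      Wval n k hkn p01 p11 β (T - t) (ω ∘ σ) :=
  optimal_value_ge_W_of_any_rearrangement_general n k T hkn p01 p11 β hp01 hp11 hβ t ω hω σ
end

section
/- Assume p01 ≤ p11 and β ∈ [0,1]. Let g : [0,1]^n → ℝ be affine in each coordinate and satisfy both: (A) 1 + g(ω_2,…,ω_n,ω_1) ≥ g(ω_1,…,ω_n) for all 0 ≤ ω_1 ≤ ⋯ ≤ ω_n ≤ 1, and (B) g(ω_1,…,ω_j, y, x, ω_{j+3},…,ω_n) ≥ g(ω_1,…,ω_j, x, y, ω_{j+3},…,ω_n) for all 0 ≤ ω_1 ≤ ⋯ ≤ ω_n ≤ 1, all 0 ≤ j ≤ n−2, and all x ≥ y in [0,1]. Define f : [0,1]^n → ℝ by f(ω_1,…,ω_n) = Σ_{i=n−k+1}^n ω_i + β · Σ_{l ∈ {0,1}^k} q(l; (ω_{n−k+1},…,ω_n)) · g(v_l), where v_l consists of (k−|l|) copies of p01, then τ(ω_1),…,τ(ω_{n−k}), then |l| copies of p11. Then for all 0 ≤ ω_1 ≤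 ⋯ ≤ ω_n ≤ 1 (with n − k ≥ 1): f(ω_1,…,ω_{n−k−1}, 1, 0, ω_{n−k+2},…,ω_n) ≤ f(ω_1,…,ω_{n−k−1}, 0, 1, ω_{n−k+2},…,ω_n), where the displayed entries occupy positions n−k and n−k+1 (the boundary between selected and unselected channels). -/
open Finset

lemma upd2_apply {n : ℕ} (ω : Fin n → ℝ) (j : ℕ) (hj : j + 1 < n) (x y : ℝ) (i : Fin n) :
    upd2 ω j hj x y i = if i.val = j + 1 then y else if i.val = j then x else ω i := by
  simp only [upd2, Function.update_apply, Fin.ext_iff]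

/-- the "base" vector used in the bubbling argument -/
noncomputable def baseV {n : ℕ} (k : ℕ) (p01 p11 : ℝ) (ω : Fin n → ℝ) (m : ℕ) : Fin n → ℝ :=
  fun j =>
    if j.val < k - m - 1 then p01
    else if j.val < n - m - 2 then tauF p01 p11 (ω ⟨j.val - (k - m - 1), by omega⟩)
    else p11

/-- intermediate vectors of the bubbling chain -/
noncomputable def cV {n : ℕ} (k : ℕ) (p01 p11 : ℝ) (ω : Fin n → ℝ) (m t : ℕ) : Fin n → ℝ :=
  fun j => if j.val = n - 1 - t then p01 else baseV k p01 p11 ω m j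

lemma cyc_vl_eq {n k : ℕ} (hk1 : 1 ≤ k) (hkn : k < n) (p01 p11 : ℝ)
    (ω : Fin n → ℝ) (m : ℕ) (hm : m < k) (hn : 0 < n)
    (pf : n - k - 1 + 1 < n) :
    cyc hn (vl k p01 p11 (upd2 ω (n - k - 1) pf 1 0) m) = cV k p01 p11 ω m 0 := by
  funext j
  rcases j with ⟨jv, hjv⟩
  simp only [cyc, vl, cV, baseV, upd2_apply, tauF]
  by_cases hlast : jv = n - 1
  · have h1 : (jv + 1) % n = 0 := by
      have : jv + 1 = n := by omega
      rw [this, Nat.mod_self]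
    simp only [h1]
    split_ifs <;> first | rfl | omega
  · have h1 : (jv + 1) % n = jv + 1 := Nat.mod_eq_of_lt (by omega)
    simp only [h1]
    split_ifs <;> first
      | rfl
      | omega
      | ring1
      | (have h' : jv + 1 - (k - m) = jv - (k - m - 1) := by omega
         simp only [h'])

lemma vl_upd01_eq {n k : ℕ} (hk1 : 1 ≤ k) (hkn : k < n) (p01 p11 : ℝ)
    (ω : Fin n → ℝ) (m : ℕ) (hm : m < k) (pf : n - k - 1 + 1 < n) :
    vl k p01 p11 (upd2 ω (n - k - 1) pf 0 1) (m + 1) = cV k p01 p11 ω m (m + 1) := by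
  funext j
  rcases j with ⟨jv, hjv⟩
  simp only [vl, cV, baseV, upd2_apply, tauF]
  split_ifs <;> first
    | rfl
    | omega
    | ring1
    | (have h' : jv - (k - (m + 1)) = jv - (k - m - 1) := by omega
       simp only [h'])

lemma cVt_eq {n k : ℕ} (hk1 : 1 ≤ k) (hkn : k < n) (p01 p11 : ℝ)
    (ω : Fin n → ℝ) (m t : ℕ) (hm : m < k) (ht : t ≤ m) (pf : n - 2 - t + 1 < n) :
    cV k p01 p11 ω m t = upd2 (baseV k p01 p11 ω m) (n - 2 - t) pf p11 p01 := by
  funext j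
  rcases j with ⟨jv, hjv⟩
  simp only [cV, baseV, upd2_apply, tauF]
  split_ifs <;> first | rfl | omega | ring1

lemma cVt1_eq {n k : ℕ} (hk1 : 1 ≤ k) (hkn : k < n) (p01 p11 : ℝ)
    (ω : Fin n → ℝ) (m t : ℕ) (hm : m < k) (ht : t ≤ m) (pf : n - 2 - t + 1 < n) :
    cV k p01 p11 ω m (t + 1) = upd2 (baseV k p01 p11 ω m) (n - 2 - t) pf p01 p11 := by
  funext j
  rcases j with ⟨jv, hjv⟩
  simp only [cV, baseV, upd2_apply, tauF]
  split_ifs <;> first | rfl | omega | ring1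

lemma key_swap {n k : ℕ} (hk1 : 1 ≤ k) (hkn : k < n)
    (p01 p11 : ℝ)
    (hp01 : p01 ∈ Set.Icc (0:ℝ) 1) (hp11 : p11 ∈ Set.Icc (0:ℝ) 1)
    (hord : p01 ≤ p11)
    (g : (Fin n → ℝ) → ℝ) (hn : 0 < n)
    (hA : ∀ ω : Fin n → ℝ, Monotone ω → (∀ i, ω i ∈ Set.Icc (0:ℝ) 1) →
      1 + g (cyc hn ω) ≥ g ω)
    (hB : ∀ ω : Fin n → ℝ, Monotone ω → (∀ i, ω i ∈ Set.Icc (0:ℝ) 1) →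
      ∀ (j : ℕ) (hj : j + 1 < n), ∀ x y : ℝ,
        x ∈ Set.Icc (0:ℝ) 1 → y ∈ Set.Icc (0:ℝ) 1 → y ≤ x →
          g (upd2 ω j hj y x) ≥ g (upd2 ω j hj x y))
    (ω : Fin n → ℝ) (hmono : Monotone ω) (hmem : ∀ i, ω i ∈ Set.Icc (0:ℝ) 1)
    (m : ℕ) (hm : m < k) (pf : n - k - 1 + 1 < n) :
    g (vl k p01 p11 (upd2 ω (n - k - 1) pf 1 0) m) ≤
      1 + g (vl k p01 p11 (upd2 ω (n - k - 1) pf 0 1) (m + 1)) := by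
  obtain ⟨hp010, hp011⟩ := hp01
  obtain ⟨hp110, hp111⟩ := hp11
  have htmono : ∀ x y : ℝ, x ≤ y → tauF p01 p11 x ≤ tauF p01 p11 y := by
    intro x y h; simp only [tauF]; nlinarith
  have f1 : ∀ x : ℝ, 0 ≤ x → p01 ≤ tauF p01 p11 x := by
    intro x h0; simp only [tauF]; nlinarith
  have f2 : ∀ x : ℝ, x ≤ 1 → tauF p01 p11 x ≤ p11 := by
    intro x h1; simp only [tauF]; nlinarith
  -- baseV is monotone and in [0,1]
  have hbmono : Monotone (baseV k p01 p11 ω m) := by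
    intro a b hab
    have hab' : a.val ≤ b.val := hab
    simp only [baseV]
    split_ifs <;> first
      | exact le_rfl
      | omega
      | exact hord
      | exact f1 _ (hmem _).1
      | exact f2 _ (hmem _).2
      | exact htmono _ _ (hmono (Fin.mk_le_mk.mpr (by omega)))
  have hbmem : ∀ i, baseV k p01 p11 ω m i ∈ Set.Icc (0:ℝ) 1 := by
    intro i
    simp only [baseV, Set.mem_Icc]
    split_ifs <;> constructor <;> first
      | omega
      | assumption
      | exact le_trans hp010 (f1 _ (hmem _).1)
      | exact le_trans (f2 _ (hmem _).2) hp111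
  -- the bubbling chain
  have step : ∀ t, t ≤ m → g (cV k p01 p11 ω m t) ≤ g (cV k p01 p11 ω m (t + 1)) := by
    intro t ht
    have pf2 : n - 2 - t + 1 < n := by omega
    rw [cVt_eq hk1 hkn p01 p11 ω m t hm ht pf2, cVt1_eq hk1 hkn p01 p11 ω m t hm ht pf2]
    exact hB _ hbmono hbmem _ pf2 p11 p01 ⟨hp110, hp111⟩ ⟨hp010, hp011⟩ hord
  have chain : ∀ t, t ≤ m + 1 → g (cV k p01 p11 ω m 0) ≤ g (cV k p01 p11 ω m t) := by
    intro t
    induction t with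
    | zero => intro _; exact le_rfl
    | succ s ih => intro hs; exact le_trans (ih (by omega)) (step s (by omega))
  -- vl of the (1,0)-vector is monotone and in [0,1]
  have hvmono : Monotone (vl k p01 p11 (upd2 ω (n - k - 1) pf 1 0) m) := by
    intro a b hab
    have hab' : a.val ≤ b.val := hab
    simp only [vl, upd2_apply]
    split_ifs <;> first
      | exact le_rfl
      | omega
      | exact hord
      | exact f1 _ (hmem _).1
      | exact f2 _ (hmem _).2
      | exact f1 _ zero_le_one
      | exact f2 _ le_rfl
      | exact htmono _ _ (hmem _).2
      | exact htmono _ _ (hmono (Fin.mk_le_mk.mpr (by omega)))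
  have hvmem : ∀ i, vl k p01 p11 (upd2 ω (n - k - 1) pf 1 0) m i ∈ Set.Icc (0:ℝ) 1 := by
    intro i
    simp only [vl, upd2_apply, Set.mem_Icc]
    split_ifs <;> constructor <;> first
      | omega
      | assumption
      | exact le_trans hp010 (f1 _ (hmem _).1)
      | exact le_trans (f2 _ (hmem _).2) hp111
      | exact le_trans hp010 (f1 _ zero_le_one)
      | exact le_trans (f2 _ le_rfl) hp111
  have h1 := hA _ hvmono hvmem
  rw [cyc_vl_eq hk1 hkn p01 p11 ω m hm hn pf] at h1
  calc g (vl k p01 p11 (upd2 ω (n - k - 1) pf 1 0) m)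
      ≤ 1 + g (cV k p01 p11 ω m 0) := h1
    _ ≤ 1 + g (cV k p01 p11 ω m (m + 1)) := by
        linarith [chain (m + 1) le_rfl]
    _ = 1 + g (vl k p01 p11 (upd2 ω (n - k - 1) pf 0 1) (m + 1)) := by
        rw [vl_upd01_eq hk1 hkn p01 p11 ω m hm pf]

/-- the key 0–1 boundary-swap inequality (Case B.3).  If `g` is
affine in each coordinate and satisfies (A) and (B), and `f` is the one-step
backward recursion, then for sorted `ω ∈ [0,1]^n` (with `n > k`),
`f(…, 1, 0, …) ≤ f(…, 0, 1, …)` where the displayed entries occupy positions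
`n-k` and `n-k+1` (1-indexed). -/
theorem boundary_zero_one_swap
    (n k : ℕ) (hk1 : 1 ≤ k) (hkn : k < n)
    (p01 p11 β : ℝ)
    (hp01 : p01 ∈ Set.Icc (0:ℝ) 1) (hp11 : p11 ∈ Set.Icc (0:ℝ) 1)
    (hβ : β ∈ Set.Icc (0:ℝ) 1) (hord : p01 ≤ p11)
    (g : (Fin n → ℝ) → ℝ)
    (haffine : ∀ ω : Fin n → ℝ, (∀ j, ω j ∈ Set.Icc (0:ℝ) 1) → ∀ i : Fin n,
      ∀ x ∈ Set.Icc (0:ℝ) 1,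
        g (Function.update ω i x) =
          (1 - x) * g (Function.update ω i 0) + x * g (Function.update ω i 1))
    (hA : ∀ ω : Fin n → ℝ, Monotone ω → (∀ i, ω i ∈ Set.Icc (0:ℝ) 1) →
      1 + g (cyc (by omega) ω) ≥ g ω)
    (hB : ∀ ω : Fin n → ℝ, Monotone ω → (∀ i, ω i ∈ Set.Icc (0:ℝ) 1) →
      ∀ (j : ℕ) (hj : j + 1 < n), ∀ x y : ℝ,
        x ∈ Set.Icc (0:ℝ) 1 → y ∈ Set.Icc (0:ℝ) 1 → y ≤ x →
          g (upd2 ω j hj y x) ≥ g (upd2 ω j hj x y))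
    (f : (Fin n → ℝ) → ℝ)
    (hf : ∀ ω : Fin n → ℝ,
      f ω = (∑ i : Fin n, if n - k ≤ i.val then ω i else 0) +
        β * ∑ l : Fin k → Bool,
          qProb (topCoords (le_of_lt hkn) ω) l * g (vl k p01 p11 ω (countTrue l))) :
    ∀ ω : Fin n → ℝ, Monotone ω → (∀ i, ω i ∈ Set.Icc (0:ℝ) 1) →
      f (upd2 ω (n - k - 1) (by omega) 1 0) ≤
        f (upd2 ω (n - k - 1) (by omega) 0 1) := by
  intro ω hmono hmem
  have pf : n - k - 1 + 1 < n := by omega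
  have main : f (upd2 ω (n - k - 1) pf 1 0) ≤ f (upd2 ω (n - k - 1) pf 0 1) := by
    rw [hf, hf]
    set ωL : Fin n → ℝ := upd2 ω (n - k - 1) pf 1 0 with hωL
    set ωR : Fin n → ℝ := upd2 ω (n - k - 1) pf 0 1 with hωR
    set uL : Fin k → ℝ := topCoords (le_of_lt hkn) ωL with huL
    set uR : Fin k → ℝ := topCoords (le_of_lt hkn) ωR with huR
    set z : Fin k := ⟨0, hk1⟩ with hz
    -- coordinate facts
    have hLmem : ∀ i, ωL i ∈ Set.Icc (0:ℝ) 1 := by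
      intro i
      rw [hωL, upd2_apply]
      split_ifs
      · exact Set.mem_Icc.mpr ⟨le_rfl, zero_le_one⟩
      · exact Set.mem_Icc.mpr ⟨zero_le_one, le_rfl⟩
      · exact hmem i
    have huL0 : uL z = 0 := by
      rw [huL, hz]
      show ωL ⟨n - k + 0, _⟩ = 0
      rw [hωL, upd2_apply]
      simp only [if_pos (show n - k + 0 = n - k - 1 + 1 by omega)]
    have huR0 : uR z = 1 := by
      rw [huR, hz]
      show ωR ⟨n - k + 0, _⟩ = 1
      rw [hωR, upd2_apply]
      simp only [if_pos (show n - k + 0 = n - k - 1 + 1 by omega)]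
    have huLR : ∀ i : Fin k, i ≠ z → uL i = uR i := by
      intro i hi
      have hi0 : i.val ≠ 0 := by
        intro h; exact hi (Fin.ext h)
      rw [huL, huR]
      show ωL ⟨n - k + i.val, _⟩ = ωR ⟨n - k + i.val, _⟩
      rw [hωL, hωR]
      simp only [upd2_apply]
      rw [if_neg (by omega), if_neg (by omega), if_neg (by omega), if_neg (by omega)]
    have huLmem : ∀ i : Fin k, 0 ≤ uL i ∧ uL i ≤ 1 := by
      intro i
      rw [huL]
      show 0 ≤ ωL ⟨n - k + i.val, _⟩ ∧ _
      have := hLmem ⟨n - k + i.val, by omega⟩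
      exact ⟨this.1, this.2⟩
    have hq0 : ∀ l : Fin k → Bool, 0 ≤ qProb uL l := by
      intro l
      apply Finset.prod_nonneg
      intro i _
      rcases huLmem i with ⟨h0, h1⟩
      split_ifs <;> linarith
    have hq1 : ∑ l : Fin k → Bool, qProb uL l = 1 := by
      have h := Finset.prod_univ_sum (fun _ : Fin k => (univ : Finset Bool))
        (fun i b => if b then uL i else 1 - uL i)
      rw [Fintype.piFinset_univ] at h
      simp only [qProb]
      rw [← h]
      simp
    -- the linear part increases by exactly 1
    have hlin : (∑ i : Fin n, if n - k ≤ i.val then ωR i else 0)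
        = (∑ i : Fin n, if n - k ≤ i.val then ωL i else 0) + 1 := by
      have hpt : ∀ i : Fin n, (if n - k ≤ i.val then ωR i else 0)
          = (if n - k ≤ i.val then ωL i else 0) + (if i.val = n - k then 1 else 0) := by
        intro i
        rw [hωL, hωR, upd2_apply, upd2_apply]
        split_ifs <;> first | omega | (exfalso; omega) | norm_num
      rw [Finset.sum_congr rfl (fun i _ => hpt i), Finset.sum_add_distrib]
      congr 1
      rw [Finset.sum_eq_single_of_mem (⟨n - k, by omega⟩ : Fin n) (Finset.mem_univ _)]
      · simp
      · intro b _ hb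
        rw [if_neg]
        intro hc
        exact hb (Fin.ext hc)
    -- the involution flipping bit z
    have hinv : ∀ l : Fin k → Bool,
        Function.update (Function.update l z (!(l z))) z
          (!(Function.update l z (!(l z)) z)) = l := by
      intro l
      funext i
      by_cases hi : i = z <;> simp [hi]
    set e : Equiv.Perm (Fin k → Bool) :=
      ⟨fun l => Function.update l z (!(l z)), fun l => Function.update l z (!(l z)),
        hinv, hinv⟩ with he
    -- termwise inequality
    have hterm : ∀ l : Fin k → Bool,
        qProb uL l * g (vl k p01 p11 ωL (countTrue l)) ≤
          qProb uR (e l) * g (vl k p01 p11 ωR (countTrue (e l))) + qProb uL l := by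
      intro l
      by_cases hl : l z = true
      · have hqL : qProb uL l = 0 :=
          Finset.prod_eq_zero (Finset.mem_univ z) (by simp [hl, huL0])
        have helz : (e l) z = false := by simp [he, hl]
        have hqR : qProb uR (e l) = 0 :=
          Finset.prod_eq_zero (Finset.mem_univ z) (by simp [helz, huR0])
        simp [hqL, hqR]
      · have hl' : l z = false := by simpa using hl
        have helz : (e l) z = true := by simp [he, hl']
        have hel : e l = Function.update l z true := by
          funext i
          by_cases hi : i = z
          · subst hi; simp [he, hl']
          · simp [he, Function.update_of_ne hi]
        have hct : countTrue (e l) = countTrue l + 1 := by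
          have hfil : (univ.filter fun i => (Function.update l z true) i = true)
              = insert z (univ.filter fun i => l i = true) := by
            ext i
            simp only [Finset.mem_filter, Finset.mem_univ, true_and, Finset.mem_insert,
              Function.update_apply]
            by_cases hi : i = z <;> simp [hi]
          rw [countTrue, countTrue, hel, hfil,
            Finset.card_insert_of_notMem (by simp [hl'])]
        have hqe : qProb uR (e l) = qProb uL l := by
          unfold qProb
          apply Finset.prod_congr rfl
          intro i _
          by_cases hi : i = z
          · subst hi
            rw [helz, huR0, hl', huL0]
            norm_num
          · have h1 : e l i = l i := by simp [he, Function.update_of_ne hi]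
            rw [h1, huLR i hi]
        have hmlt : countTrue l < k := by
          have hss : (univ.filter fun i => l i = true) ⊂ univ := by
            rw [Finset.ssubset_univ_iff]
            intro hc
            have : z ∈ univ.filter fun i => l i = true := by
              rw [hc]; exact Finset.mem_univ z
            simp [hl'] at this
          have := Finset.card_lt_card hss
          rwa [Finset.card_univ, Fintype.card_fin] at this
        have hkey := key_swap hk1 hkn p01 p11 hp01 hp11 hord g (by omega) hA hB
          ω hmono hmem (countTrue l) hmlt pf
        rw [hqe, hct]
        have h2 := mul_le_mul_of_nonneg_left hkey (hq0 l)
        have h3 : qProb uL l * (1 + g (vl k p01 p11 (upd2 ω (n - k - 1) pf 0 1)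
            (countTrue l + 1)))
            = qProb uL l * g (vl k p01 p11 (upd2 ω (n - k - 1) pf 0 1)
            (countTrue l + 1)) + qProb uL l := by ring
        rw [h3] at h2
        exact h2
    have hsum1 : (∑ l : Fin k → Bool, qProb uL l * g (vl k p01 p11 ωL (countTrue l)))
        ≤ (∑ l : Fin k → Bool,
            (qProb uR (e l) * g (vl k p01 p11 ωR (countTrue (e l))) + qProb uL l)) :=
      Finset.sum_le_sum (fun l _ => hterm l)
    rw [Finset.sum_add_distrib, hq1] at hsum1
    have hsum2 : (∑ l : Fin k → Bool,
          qProb uR (e l) * g (vl k p01 p11 ωR (countTrue (e l))))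
        = ∑ l : Fin k → Bool, qProb uR l * g (vl k p01 p11 ωR (countTrue l)) :=
      Equiv.sum_comp e (fun l => qProb uR l * g (vl k p01 p11 ωR (countTrue l)))
    rw [hsum2] at hsum1
    rw [hlin]
    nlinarith [hsum1, hβ.1, hβ.2]
  exact main
end
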